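/- Let G act small scale uniformly equicontinuously on a chain connected uniform space X. If the projection p: X → X/G has approximate uniqueness of chain lifts, then the action has small scale bounded orbits. -/

import Mathlib

open scoped Uniformity

/-- Symmetric relation (Mathlib's former `SymmetricRel`, removed since). -/
def SymmetricRel {α : Type*} (V : Set (α × α)) : Prop :=
  Prod.swap ⁻¹' V = V

/-- An `E`-chain: consecutive members of the list are `E`-related. -/
def ChainIn {α : Type*} (E : Set (α × α)) (c : List α) : Prop :=
  c.Chain' fun a b => (a, b) ∈ E

/-- The image `f(E)` of a relation under a map. -/
def imgRel {α β : Type*} (f : α → β) (E : Set (α × α)) : Set (β × β) :=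
  Prod.map f f '' E

/-- The orbit projection `p : X → X/G`. -/
def proj (G X : Type*) [Group G] [MulAction G X] :
    X → Quotient (MulAction.orbitRel G X) :=
  Quotient.mk (MulAction.orbitRel G X)

/-- `G_F`: the subgroup of `G` generated by `S_F = {h | (x, h • x) ∈ F for some x}`. -/
def GF (G : Type*) {X : Type*} [Group G] [MulAction G X] (F : Set (X × X)) : Subgroup G :=
  Subgroup.closure {h : G | ∃ x : X, (x, h • x) ∈ F}

/-- Chain lifting property for `f : X → Y`: for every (symmetric) entourage `E` of `X`
there is an entourage `F` such that every `f(F)`-chain starting at `f x₀` lifts to an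
`E`-chain starting at `x₀`. -/
def HasChainLifting {X Y : Type*} [UniformSpace X] (f : X → Y) : Prop :=
  ∀ E ∈ 𝓤 X, SymmetricRel E → ∃ F ∈ 𝓤 X, SymmetricRel F ∧
    ∀ (x₀ : X) (d : List Y), ChainIn (imgRel f F) d → d.head? = some (f x₀) →
      ∃ c : List X, ChainIn E c ∧ c.head? = some x₀ ∧ c.map f = d

/-- Uniqueness of chain lifts: there is an entourage `F` such that two `F`-chains with the
same origin and the same image are equal. -/
def HasUniqueChainLifts {X Y : Type*} [UniformSpace X] (f : X → Y) : Prop :=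
  ∃ F ∈ 𝓤 X, SymmetricRel F ∧
    ∀ α β : List X, ChainIn F α → ChainIn F β →
      α.head? = β.head? → α.map f = β.map f → α = β

/-- Approximate uniqueness of chain lifts: for every entourage `E` there is an entourage `F`
such that two `F`-chains with the same origin and the same image are `E`-close. -/
def HasApproxUniqueChainLifts {X Y : Type*} [UniformSpace X] (f : X → Y) : Prop :=
  ∀ E ∈ 𝓤 X, SymmetricRel E → ∃ F ∈ 𝓤 X, SymmetricRel F ∧
    ∀ α β : List X, ChainIn F α → ChainIn F β →
      α.head? = β.head? → α.map f = β.map f →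
        List.Forall₂ (fun a b => (a, b) ∈ E) α β

/-- Neutral action. -/
def Neutral (G X : Type*) [Group G] [MulAction G X] [UniformSpace X] : Prop :=
  ∀ E ∈ 𝓤 X, SymmetricRel E → ∃ F ∈ 𝓤 X, SymmetricRel F ∧
    ∀ (x y : X) (h : G), (x, h • y) ∈ F → ∃ g : G, (g • x, y) ∈ E

/-- Uniformly properly discontinuous action. -/
def UnifProperlyDiscontinuous (G X : Type*) [Group G] [MulAction G X] [UniformSpace X] : Prop :=
  ∃ E ∈ 𝓤 X, SymmetricRel E ∧ ∀ (x : X) (g : G), (x, g • x) ∈ E → g = 1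

/-- Equicontinuous action. -/
def EquicontinuousAction (G X : Type*) [Group G] [MulAction G X] [UniformSpace X] : Prop :=
  ∀ E ∈ 𝓤 X, ∃ F ∈ 𝓤 X, ∀ (g : G) (x y : X), (x, y) ∈ F → (g • x, g • y) ∈ E

/-- Small scale uniformly continuous action. -/
def SSUnifCont (G X : Type*) [Group G] [MulAction G X] [UniformSpace X] : Prop :=
  ∀ E ∈ 𝓤 X, SymmetricRel E → ∃ F ∈ 𝓤 X, SymmetricRel F ∧
    ∀ g ∈ GF G F, {q : X × X | (g • q.1, g • q.2) ∈ E} ∈ 𝓤 X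

/-- Small scale uniformly equicontinuous action. -/
def SSUnifEquicont (G X : Type*) [Group G] [MulAction G X] [UniformSpace X] : Prop :=
  ∀ E ∈ 𝓤 X, SymmetricRel E → ∃ F ∈ 𝓤 X, SymmetricRel F ∧
    ∀ g ∈ GF G F, ∀ x y : X, (x, y) ∈ F → (g • x, g • y) ∈ E

/-- Small scale bounded orbits: the orbits of `G_F` are `E`-bounded. -/
def SSBoundedOrbits (G X : Type*) [Group G] [MulAction G X] [UniformSpace X] : Prop :=
  ∀ E ∈ 𝓤 X, SymmetricRel E → ∃ F ∈ 𝓤 X, SymmetricRel F ∧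
    ∀ x : X, ∀ g ∈ GF G F, ∀ g' ∈ GF G F, (g • x, g' • x) ∈ E

/-- Chain connected uniform space. -/
def ChainConnectedU (X : Type*) [UniformSpace X] : Prop :=
  ∀ E ∈ 𝓤 X, SymmetricRel E → ∀ x y : X,
    ∃ c : List X, ChainIn E c ∧ c.head? = some x ∧ c.getLast? = some y

/-!
Fix `E`, let `F₁` be an entourage at which `F₁`-chain lifts are `E`-close, and let `F ⊆ F₁` be
small enough that `G_F` maps `F`-close pairs to `F₁`-close pairs. For `g ∈ G_F` and any `z`,
induction on a word for `g` in the generators `s` of `G_F`, `(y, s • y) ∈ F`, produces two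
`F₁`-chains with a common origin and the same image in `X/G`, ending at `z` and `g • z`:
to pass from `g` to `g * s`, append to the pair ending at `y`, `g • y` an `F`-chain `c` from
`y` to `z` (chain connectedness) and its translate `(g * s) • c`, which is an `F₁`-chain
joined to `g • y` because `(g • y, g • s • y) ∈ F₁`. Hence `(z, g • z) ∈ E`.
-/

theorem List.Forall₂.rel_of_getLast? {α β : Type*} {R : α → β → Prop} {l₁ : List α}
    {l₂ : List β} {a : α} {b : β} (h : List.Forall₂ R l₁ l₂) (h₁ : l₁.getLast? = some a)
    (h₂ : l₂.getLast? = some b) : R a b := by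
  have h' := List.forall₂_reverse_iff.2 h
  rw [← List.head?_reverse] at h₁ h₂
  generalize l₁.reverse = m₁ at h' h₁
  generalize l₂.reverse = m₂ at h' h₂
  cases h' with
  | nil => simp at h₁
  | cons hr _ => simp_all

theorem SymmetricRel.inter {α : Type*} {U V : Set (α × α)} (hU : SymmetricRel U)
    (hV : SymmetricRel V) : SymmetricRel (U ∩ V) := by
  rw [SymmetricRel, Set.preimage_inter, hU, hV]

theorem SymmetricRel.mk_mem_comm {α : Type*} {V : Set (α × α)} (hV : SymmetricRel V)
    {a b : α} : (a, b) ∈ V ↔ (b, a) ∈ V :=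
  Set.ext_iff.1 hV (b, a)

section TwinChains

variable {X Y : Type*} (f : X → Y) (F : Set (X × X))

def TwinChainEnds (a b : X) : Prop :=
  ∃ A B : List X, ChainIn F A ∧ ChainIn F B ∧ A.head? = B.head? ∧ A.map f = B.map f ∧
    A.getLast? = some a ∧ B.getLast? = some b

variable {f F}

theorem TwinChainEnds.refl (a : X) : TwinChainEnds f F a a :=
  ⟨[a], [a], List.isChain_singleton a, List.isChain_singleton a, rfl, rfl, rfl, rfl⟩

theorem TwinChainEnds.append {a b x y : X} (h : TwinChainEnds f F a b) {c d : List X}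
    (hc : ChainIn F (a :: c)) (hd : ChainIn F (b :: d)) (hcd : c.map f = d.map f)
    (hx : c.getLast? = some x) (hy : d.getLast? = some y) : TwinChainEnds f F x y := by
  obtain ⟨A, B, hA, hB, hhead, hmap, ha, hb⟩ := h
  refine ⟨A ++ c, B ++ d, ?_, ?_, ?_, ?_, ?_, ?_⟩
  · refine hA.append (List.isChain_cons.1 hc).2 ?_
    simpa [ha] using (List.isChain_cons.1 hc).1
  · refine hB.append (List.isChain_cons.1 hd).2 ?_
    simpa [hb] using (List.isChain_cons.1 hd).1
  · rw [List.head?_append, List.head?_append, hhead]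
    cases B <;> simp_all
  · rw [List.map_append, List.map_append, hmap, hcd]
  · rw [List.getLast?_append, hx]; rfl
  · rw [List.getLast?_append, hy]; rfl

theorem HasApproxUniqueChainLifts.exists_twinChainEnds [UniformSpace X]
    (hf : HasApproxUniqueChainLifts f)
    {E : Set (X × X)} (hE : E ∈ 𝓤 X) (hEsym : SymmetricRel E) :
    ∃ F ∈ 𝓤 X, SymmetricRel F ∧ ∀ a b : X, TwinChainEnds f F a b → (a, b) ∈ E := by
  obtain ⟨F, hF, hFsym, hclose⟩ := hf E hE hEsym
  refine ⟨F, hF, hFsym, fun a b ⟨A, B, hA, hB, hhead, hmap, ha, hb⟩ => ?_⟩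
  exact (hclose A B hA hB hhead hmap).rel_of_getLast? ha hb

end TwinChains

section GroupAction

variable {G X : Type*} [Group G] [MulAction G X]

theorem proj_smul (g : G) (x : X) : proj G X (g • x) = proj G X x :=
  Quotient.sound ⟨g, rfl⟩

theorem GF_mono {F F' : Set (X × X)} (h : F ⊆ F') : GF G F ≤ GF G F' :=
  Subgroup.closure_mono fun _ ⟨x, hx⟩ => ⟨x, h hx⟩

variable [UniformSpace X] {F F₁ : Set (X × X)}

theorem TwinChainEnds.mul_generator (hF₁ : F₁ ∈ 𝓤 X) (hFF₁ : F ⊆ F₁)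
    (hequi : ∀ g ∈ GF G F, ∀ x y : X, (x, y) ∈ F → (g • x, g • y) ∈ F₁)
    (hcc : ∀ x y : X, ∃ c : List X, ChainIn F c ∧ c.head? = some x ∧ c.getLast? = some y)
    {g s : G} (hg : g ∈ GF G F) {y : X} (hs : (y, s • y) ∈ F)
    (ih : ∀ z : X, TwinChainEnds (proj G X) F₁ z (g • z)) (x : X) :
    TwinChainEnds (proj G X) F₁ x ((g * s) • x) := by
  have hgs : g * s ∈ GF G F := mul_mem hg (Subgroup.subset_closure ⟨y, hs⟩)
  obtain ⟨c, hc, hcy, hcx⟩ := hcc y x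
  obtain ⟨c, rfl⟩ : ∃ c', c = y :: c' := by
    cases c with
    | nil => simp at hcy
    | cons u c' => exact ⟨c', by simpa using hcy⟩
  refine (ih y).append (c := y :: c) (d := (y :: c).map ((g * s) • ·)) ?_ ?_ ?_ hcx ?_
  · exact (hc.imp fun _ _ h => hFF₁ h).cons (by simpa using refl_mem_uniformity hF₁)
  · refine (List.isChain_map_of_isChain _ (hequi _ hgs) hc).cons ?_
    simpa [mul_smul] using hequi g hg y (s • y) hs
  · simp [Function.comp_def, proj_smul]
  · rw [List.getLast?_map, hcx]; rfl

theorem twinChainEnds_smul (hF₁ : F₁ ∈ 𝓤 X) (hFF₁ : F ⊆ F₁) (hF : SymmetricRel F)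
    (hequi : ∀ g ∈ GF G F, ∀ x y : X, (x, y) ∈ F → (g • x, g • y) ∈ F₁)
    (hcc : ∀ x y : X, ∃ c : List X, ChainIn F c ∧ c.head? = some x ∧ c.getLast? = some y)
    {g : G} (hg : g ∈ GF G F) (x : X) : TwinChainEnds (proj G X) F₁ x (g • x) := by
  induction hg using Subgroup.closure_induction_right generalizing x with
  | one => simpa using TwinChainEnds.refl x
  | mul_right g hg s hs ih =>
    obtain ⟨y, hy⟩ := hs
    exact TwinChainEnds.mul_generator hF₁ hFF₁ hequi hcc hg hy ih x
  | mul_inv_cancel g hg s hs ih =>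
    obtain ⟨y, hy⟩ := hs
    refine TwinChainEnds.mul_generator hF₁ hFF₁ hequi hcc hg (y := s • y) ?_ ih x
    simpa [hF.mk_mem_comm] using hy

end GroupAction

/-- For a small scale uniformly equicontinuous action on a chain connected space,
approximate uniqueness of chain lifts for the projection implies small scale bounded
orbits. -/
theorem stmt6 (G X : Type*) [Group G] [MulAction G X] [UniformSpace X]
    (hss : SSUnifEquicont G X) (hcc : ChainConnectedU X)
    (happrox : HasApproxUniqueChainLifts (proj G X)) :
    SSBoundedOrbits G X := by
  intro E hE hEsym
  obtain ⟨F₁, hF₁, hF₁sym, hlift⟩ := happrox.exists_twinChainEnds hE hEsym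
  obtain ⟨F₀, hF₀, hF₀sym, hequi⟩ := hss F₁ hF₁ hF₁sym
  have hF : F₀ ∩ F₁ ∈ 𝓤 X := Filter.inter_mem hF₀ hF₁
  have hFsym : SymmetricRel (F₀ ∩ F₁) := hF₀sym.inter hF₁sym
  have hmove : ∀ k ∈ GF G (F₀ ∩ F₁), ∀ z : X, (z, k • z) ∈ E := fun k hk z =>
    hlift z (k • z) <| twinChainEnds_smul hF₁ Set.inter_subset_right hFsym
        (fun g hg x y hxy => hequi g (GF_mono Set.inter_subset_left hg) x y hxy.1)
        (hcc _ hF hFsym) hk z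
  refine ⟨F₀ ∩ F₁, hF, hFsym, fun x g hg g' hg' => ?_⟩
  simpa [smul_smul] using hmove (g' * g⁻¹) (mul_mem hg' (inv_mem hg)) (g • x)
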